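/- arXiv:1409.0222 — 2 statements merged into one kernel-verified Lean document; each statement's English description precedes it below -/
import Mathlib

section
/- If I is a non-trivial nowhere tall fragmented ideal on ω, then the Rothberger number 𝔟(I) equals the unbounding number 𝔟. -/
open Set Filter Cardinal

/-- `I` is an ideal on `ω`: contains all finite sets, downward closed, closed under unions. -/
def IsIdealOn (I : Set (Set ℕ)) : Prop :=
  (∀ x : Set ℕ, x.Finite → x ∈ I) ∧
  (∀ x y : Set ℕ, x ⊆ y → y ∈ I → x ∈ I) ∧
  (∀ x y : Set ℕ, x ∈ I → y ∈ I → x ∪ y ∈ I)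

/-- The pair `⟨A, B⟩` is `I`-orthogonal. -/
def IOrthogonal (I A B : Set (Set ℕ)) : Prop := ∀ s ∈ A, ∀ t ∈ B, s ∩ t ∈ I

/-- `C` separates the pair `⟨A, B⟩` with respect to `I`. -/
def ISeparates (I A B : Set (Set ℕ)) (C : Set ℕ) : Prop :=
  (∀ s ∈ A, s ∩ C ∈ I) ∧ (∀ t ∈ B, t \ C ∈ I)

/-- The pair `⟨A, B⟩` is an `I`-gap. -/
def IsIGap (I A B : Set (Set ℕ)) : Prop :=
  IOrthogonal I A B ∧ ∀ C : Set ℕ, ¬ ISeparates I A B C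

/-- There is an `I`-(ω, lam)-gap. -/
def HasOmegaGap (I : Set (Set ℕ)) (lam : Cardinal) : Prop :=
  ∃ A B : Set (Set ℕ), IsIGap I A B ∧ #A = ℵ₀ ∧ #B = lam

/-- `a` is a partition of `ω` into nonempty finite sets. -/
def IsPartitionFin (a : ℕ → Set ℕ) : Prop :=
  (∀ i, (a i).Nonempty) ∧ (∀ i, (a i).Finite) ∧
  (∀ i j, i ≠ j → Disjoint (a i) (a j)) ∧ (⋃ i, a i) = Set.univ

/-- `φ` is a submeasure on the powerset of the set `s`. -/
def IsSubmeasureOn (s : Set ℕ) (φ : Set ℕ → ℝ) : Prop :=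
  φ ∅ = 0 ∧ (∀ x, x ⊆ s → 0 ≤ φ x) ∧
  (∀ x y, x ⊆ y → y ⊆ s → φ x ≤ φ y) ∧
  (∀ x y, x ⊆ s → y ⊆ s → φ (x ∪ y) ≤ φ x + φ y)

/-- `I = I⟨a_i, φ_i⟩` is the fragmented ideal determined by the partition `a`
and the submeasures `φ`. -/
def IsFragmentation (I : Set (Set ℕ)) (a : ℕ → Set ℕ) (φ : ℕ → Set ℕ → ℝ) : Prop :=
  IsPartitionFin a ∧ (∀ i, IsSubmeasureOn (a i) (φ i)) ∧
  ∀ x : Set ℕ, x ∈ I ↔ ∃ K : ℝ, ∀ i, φ i (x ∩ a i) ≤ K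

/-- Gradual fragmentation of `⟨a_i, φ_i⟩`. -/
def GraduallyFragmented (a : ℕ → Set ℕ) (φ : ℕ → Set ℕ → ℝ) : Prop :=
  ∀ k : ℕ, ∃ m : ℕ, ∀ l : ℕ, ∀ᶠ i in atTop,
    ∀ B : Finset (Set ℕ), (∀ b ∈ B, b ⊆ a i) → B.card ≤ l →
      (∀ b ∈ B, φ i b ≤ (k : ℝ)) → φ i (⋃₀ (↑B : Set (Set ℕ))) ≤ (m : ℝ)

/-- The restriction `I ↾ X` is tall. -/
def IsTallOn (I : Set (Set ℕ)) (X : Set ℕ) : Prop :=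
  ∀ Y : Set ℕ, Y ⊆ X → Y.Infinite → ∃ Z, Z ⊆ Y ∧ Z.Infinite ∧ Z ∈ I

def IsTall (I : Set (Set ℕ)) : Prop := IsTallOn I Set.univ

def SomewhereTall (I : Set (Set ℕ)) : Prop := ∃ X : Set ℕ, X ∉ I ∧ IsTallOn I X

def NowhereTall (I : Set (Set ℕ)) : Prop := ¬ SomewhereTall I

/-- The unbounding number `𝔟`. -/
noncomputable def unboundingNumber : Cardinal :=
  sInf {c | ∃ F : Set (ℕ → ℕ), #F = c ∧
    ∀ g : ℕ → ℕ, ∃ f ∈ F, ¬ ∀ᶠ i in atTop, f i ≤ g i}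

/-- The additivity of the Lebesgue-null ideal, `add(N)`. -/
noncomputable def addNull : Cardinal :=
  sInf {c | ∃ F : Set (Set ℝ), #F = c ∧ (∀ s ∈ F, MeasureTheory.volume s = 0) ∧
    MeasureTheory.volume (⋃₀ F) ≠ 0}

/-!
Blocks of a fragmentation are finite, so any infinite set has an infinite subset meeting each
block at most once; on such a set every `φ_i` is bounded by the largest weight `φ_i({n})` of its
points. Hence, if `I⟨a_i, φ_i⟩` is nowhere tall, each set of points of weight `≤ k` lies in `I`,
and `I` is exactly the ideal of sets on which the integer weight `n ↦ ⌈φ_i({n})⌉` (for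
`n ∈ a_i`) is bounded, with unbounded weight since `I` is non-trivial.

For such an ideal, picking for each `m` a new point of weight `≥ m` turns it, on a copy of `ω`,
into the ideal of finite sets, where the columns `{(i, j) : i ≤ p}` and the regions below the
graphs of an unbounded family form an `(ω, 𝔟)`-gap. Conversely, given an `(ω, λ)`-gap
`⟨{s_n}, ℬ⟩`, every `t ∈ ℬ` yields the function bounding the weight on `(s_0 ∪ ⋯ ∪ s_n) ∩ t`;
if `λ < 𝔟` these functions are eventually dominated by one `g`, and removing from `ω` the points
of `s_0 ∪ ⋯ ∪ s_n` of weight `> g n`, for all `n`, leaves a separating set.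
-/

def IsUnboundedFamily (F : Set (ℕ → ℕ)) : Prop :=
  ∀ g : ℕ → ℕ, ∃ f ∈ F, ¬ ∀ᶠ i in atTop, f i ≤ g i

theorem unboundingNumber_le {F : Set (ℕ → ℕ)} (hF : IsUnboundedFamily F) :
    unboundingNumber ≤ #F :=
  csInf_le (OrderBot.bddBelow _) ⟨F, rfl, hF⟩

theorem exists_isUnboundedFamily_mk_eq :
    ∃ F : Set (ℕ → ℕ), IsUnboundedFamily F ∧ #F = unboundingNumber := by
  have hne : {c | ∃ F : Set (ℕ → ℕ), #F = c ∧ IsUnboundedFamily F}.Nonempty := by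
    refine ⟨_, univ, rfl, fun g => ⟨fun i => g i + 1, mem_univ _, fun h => ?_⟩⟩
    obtain ⟨i, hi⟩ := h.exists
    exact (g i).not_succ_le_self hi
  obtain ⟨F, hF, hunb⟩ := csInf_mem hne
  exact ⟨F, hunb, hF⟩

theorem HasOmegaGap.image {I J : Set (Set ℕ)} {P : ℕ → ℕ} {lam : Cardinal}
    (hP : Function.Injective P) (hPI : ∀ S, P '' S ∈ I ↔ S ∈ J) (h : HasOmegaGap J lam) :
    HasOmegaGap I lam := by
  obtain ⟨A, B, ⟨horth, hsep⟩, hA, hB⟩ := h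
  refine ⟨Set.image P '' A, Set.image P '' B, ⟨?_, fun C ⟨hCA, hCB⟩ => ?_⟩, ?_, ?_⟩
  · rintro _ ⟨s, hs, rfl⟩ _ ⟨t, ht, rfl⟩
    rw [← image_inter hP, hPI]
    exact horth s hs t ht
  · refine hsep (P ⁻¹' C) ⟨fun s hs => ?_, fun t ht => ?_⟩
    · rw [← hPI, image_inter_preimage]
      exact hCA _ (mem_image_of_mem _ hs)
    · rw [← hPI, image_sdiff_preimage]
      exact hCB _ (mem_image_of_mem _ ht)
  · rwa [mk_image_eq (image_injective.mpr hP)]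
  · rwa [mk_image_eq (image_injective.mpr hP)]

section FrechetGap

/-- The set `{(i, j) : i ≤ p}`, coded through `Nat.unpair`. -/
def pairColumn (p : ℕ) : Set ℕ := {n | n.unpair.1 ≤ p}

/-- The set `{(i, j) : j ≤ f i}`, coded through `Nat.unpair`. -/
def pairSubgraph (f : ℕ → ℕ) : Set ℕ := {n | n.unpair.2 ≤ f n.unpair.1}

theorem pair_mem_pairColumn_iff {p i j : ℕ} : Nat.pair i j ∈ pairColumn p ↔ i ≤ p := by
  simp [pairColumn]

theorem pair_mem_pairSubgraph_iff {f : ℕ → ℕ} {i j : ℕ} :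
    Nat.pair i j ∈ pairSubgraph f ↔ j ≤ f i := by
  simp [pairSubgraph]

theorem pairColumn_injective : Function.Injective pairColumn := by
  have hle : ∀ p q, pairColumn p = pairColumn q → p ≤ q := fun p q h =>
    pair_mem_pairColumn_iff.mp (h ▸ pair_mem_pairColumn_iff.mpr le_rfl : Nat.pair p 0 ∈ _)
  exact fun p q h => le_antisymm (hle p q h) (hle q p h.symm)

theorem pairSubgraph_injective : Function.Injective pairSubgraph := by
  have hle : ∀ f g, pairSubgraph f = pairSubgraph g → ∀ i, f i ≤ g i := fun f g h i =>
    pair_mem_pairSubgraph_iff.mp (h ▸ pair_mem_pairSubgraph_iff.mpr le_rfl : Nat.pair i (f i) ∈ _)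
  exact fun f g h => funext fun i => le_antisymm (hle f g h i) (hle g f h.symm i)

theorem finite_pairColumn_inter_pairSubgraph (p : ℕ) (f : ℕ → ℕ) :
    (pairColumn p ∩ pairSubgraph f).Finite := by
  refine ((finite_Iic (p, (Finset.range (p + 1)).sup f)).preimage
    Nat.pairEquiv.symm.injective.injOn).subset ?_
  rintro n ⟨hp, hf⟩
  exact ⟨hp, hf.trans (Finset.le_sup (Finset.mem_range_succ_iff.mpr hp))⟩

theorem hasOmegaGap_finite : HasOmegaGap {x | x.Finite} unboundingNumber := by
  obtain ⟨F, hunb, hF⟩ := exists_isUnboundedFamily_mk_eq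
  refine ⟨range pairColumn, pairSubgraph '' F, ⟨?_, fun C ⟨hCA, hCB⟩ => ?_⟩, ?_, ?_⟩
  · rintro _ ⟨p, rfl⟩ _ ⟨f, -, rfl⟩
    exact finite_pairColumn_inter_pairSubgraph p f
  · choose g hg using fun p => (hCA _ (mem_range_self p)).bddAbove
    have hC : ∀ i j, Nat.pair i j ∈ C → j ≤ g i := fun i j h =>
      (Nat.right_le_pair i j).trans (hg i ⟨pair_mem_pairColumn_iff.mpr le_rfl, h⟩)
    obtain ⟨f, hf, hfg⟩ := hunb g
    have hinf : {i | g i < f i}.Infinite := by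
      rw [← Nat.frequently_atTop_iff_infinite]
      simpa only [not_eventually, not_le] using hfg
    refine hinf (((hCB _ (mem_image_of_mem _ hf)).image fun n => n.unpair.1).subset ?_)
    intro i hi
    refine ⟨Nat.pair i (f i), ⟨pair_mem_pairSubgraph_iff.mpr le_rfl, fun h => ?_⟩, by simp⟩
    exact (hC i (f i) h).not_gt hi
  · rw [mk_range_eq _ pairColumn_injective, mk_nat]
  · rw [mk_image_eq pairSubgraph_injective, hF]

end FrechetGap

section BoundedIdeal

variable {e : ℕ → ℕ}

def boundedIdeal (e : ℕ → ℕ) : Set (Set ℕ) := {x | BddAbove (e '' x)}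

theorem exists_strictMono_le_comp (he : ¬ BddAbove (range e)) :
    ∃ P : ℕ → ℕ, StrictMono P ∧ ∀ m, m ≤ e (P m) := by
  refine extraction_forall_of_frequently (P := fun m n => m ≤ e n) fun m => ?_
  rw [Nat.frequently_atTop_iff_infinite]
  intro hfin
  obtain ⟨M, hM⟩ := (hfin.image e).bddAbove
  refine he ⟨max m M, ?_⟩
  rintro _ ⟨n, rfl⟩
  rcases le_or_gt m (e n) with h | h
  · exact (hM (mem_image_of_mem e h)).trans (le_max_right _ _)
  · exact h.le.trans (le_max_left _ _)

theorem image_mem_boundedIdeal_iff {P : ℕ → ℕ} (hP : ∀ m, m ≤ e (P m)) {S : Set ℕ} :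
    P '' S ∈ boundedIdeal e ↔ S.Finite := by
  refine ⟨fun ⟨k, hk⟩ => (finite_Iic k).subset fun m hm => ?_,
    fun hS => ((hS.image P).image e).bddAbove⟩
  exact (hP m).trans (hk (mem_image_of_mem e (mem_image_of_mem P hm)))

theorem hasOmegaGap_boundedIdeal (he : ¬ BddAbove (range e)) :
    HasOmegaGap (boundedIdeal e) unboundingNumber := by
  obtain ⟨P, hPmono, hP⟩ := exists_strictMono_le_comp he
  exact hasOmegaGap_finite.image hPmono.injective fun S => image_mem_boundedIdeal_iff hP

theorem IOrthogonal.accumulate_inter_mem_boundedIdeal {s : ℕ → Set ℕ} {B : Set (Set ℕ)}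
    (h : IOrthogonal (boundedIdeal e) (range s) B) {t : Set ℕ} (ht : t ∈ B) (n : ℕ) :
    accumulate s n ∩ t ∈ boundedIdeal e := by
  simp only [boundedIdeal, mem_ofPred_eq, accumulate_def, iUnion₂_inter, image_iUnion₂]
  exact (finite_Iic n).bddAbove_biUnion.mpr fun m _ => h _ (mem_range_self m) t ht

theorem iSeparates_boundedIdeal_of_eventually_le {s : ℕ → Set ℕ} {B : Set (Set ℕ)} {g : ℕ → ℕ}
    (horth : IOrthogonal (boundedIdeal e) (range s) B)
    (hg : ∀ t ∈ B, ∀ᶠ n in atTop, ∀ m ∈ accumulate s n ∩ t, e m ≤ g n) :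
    ISeparates (boundedIdeal e) (range s) B (⋃ n, accumulate s n ∩ {m | g n < e m})ᶜ := by
  constructor
  · rintro _ ⟨N, rfl⟩
    refine ⟨g N, ?_⟩
    rintro _ ⟨m, ⟨hmN, hmC⟩, rfl⟩
    by_contra hlt
    exact hmC (mem_iUnion.mpr ⟨N, subset_accumulate hmN, not_le.mp hlt⟩)
  · intro t ht
    obtain ⟨N, hN⟩ := eventually_atTop.mp (hg t ht)
    refine (horth.accumulate_inter_mem_boundedIdeal ht N).mono (image_mono ?_)
    rintro m ⟨hmt, hmC⟩
    obtain ⟨n, hmn, hgn⟩ := mem_iUnion.mp (not_notMem.mp hmC)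
    refine ⟨monotone_accumulate (le_of_not_ge fun hNn => ?_) hmn, hmt⟩
    exact (hN n hNn m ⟨hmn, hmt⟩).not_gt hgn

theorem unboundingNumber_le_of_hasOmegaGap {lam : Cardinal}
    (h : HasOmegaGap (boundedIdeal e) lam) : unboundingNumber ≤ lam := by
  obtain ⟨A, B, ⟨horth, hsep⟩, hA, hB⟩ := h
  obtain ⟨s, rfl⟩ : ∃ s : ℕ → Set ℕ, A = range s := by
    refine Countable.exists_eq_range ?_ ?_
    · rw [← countable_coe_iff, ← mk_le_aleph0_iff, hA]
    · rw [← nonempty_coe_sort, ← mk_ne_zero_iff, hA]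
      exact aleph0_ne_zero
  choose f hf using fun (t : B) n => horth.accumulate_inter_mem_boundedIdeal t.2 n
  rw [← hB]
  refine (unboundingNumber_le (F := range f) fun g => ?_).trans mk_range_le
  by_contra! hdom
  refine hsep _ (iSeparates_boundedIdeal_of_eventually_le (g := g) horth fun t ht => ?_)
  exact (hdom _ ⟨⟨t, ht⟩, rfl⟩).mono fun n hn m hm =>
    (hf ⟨t, ht⟩ n (mem_image_of_mem e hm)).trans hn

end BoundedIdeal

section Fragmentation

variable {I : Set (Set ℕ)} {a : ℕ → Set ℕ} {φ : ℕ → Set ℕ → ℝ}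

noncomputable def blockIndex (a : ℕ → Set ℕ) (n : ℕ) : ℕ := Classical.epsilon fun i => n ∈ a i

theorem IsPartitionFin.mem_iff_blockIndex_eq (ha : IsPartitionFin a) {n i : ℕ} :
    n ∈ a i ↔ blockIndex a n = i := by
  have hmem : n ∈ a (blockIndex a n) :=
    Classical.epsilon_spec (mem_iUnion.mp (ha.2.2.2 ▸ mem_univ n))
  refine ⟨fun hi => ?_, fun h => h ▸ hmem⟩
  by_contra hne
  exact disjoint_left.mp (ha.2.2.1 _ _ hne) hmem hi

noncomputable def pointWeight (a : ℕ → Set ℕ) (φ : ℕ → Set ℕ → ℝ) (n : ℕ) : ℕ :=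
  ⌈φ (blockIndex a n) {n}⌉₊

namespace IsFragmentation

theorem mem_of_subset (hI : IsFragmentation I a φ) {x y : Set ℕ} (hxy : x ⊆ y) (hy : y ∈ I) :
    x ∈ I := by
  obtain ⟨K, hK⟩ := (hI.2.2 y).mp hy
  refine (hI.2.2 x).mpr ⟨K, fun i => le_trans ?_ (hK i)⟩
  exact (hI.2.1 i).2.2.1 _ _ (inter_subset_inter_left _ hxy) inter_subset_right

theorem bddAbove_pointWeight (hI : IsFragmentation I a φ) {x : Set ℕ} (hx : x ∈ I) :
    BddAbove (pointWeight a φ '' x) := by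
  obtain ⟨K, hK⟩ := (hI.2.2 x).mp hx
  refine ⟨⌈K⌉₊, ?_⟩
  rintro _ ⟨n, hn, rfl⟩
  have hna : n ∈ a (blockIndex a n) := hI.1.mem_iff_blockIndex_eq.mpr rfl
  refine Nat.ceil_le_ceil (le_trans ?_ (hK (blockIndex a n)))
  exact (hI.2.1 _).2.2.1 _ _ (singleton_subset_iff.mpr ⟨hn, hna⟩) inter_subset_right

theorem mem_of_injOn_blockIndex (hI : IsFragmentation I a φ) {k : ℕ} {Z : Set ℕ}
    (hZ : ∀ n ∈ Z, pointWeight a φ n ≤ k) (hinj : InjOn (blockIndex a) Z) : Z ∈ I := by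
  refine (hI.2.2 Z).mpr ⟨k, fun i => ?_⟩
  rcases (Z ∩ a i).eq_empty_or_nonempty with h | ⟨z, hzZ, hzi⟩
  · rw [h, (hI.2.1 i).1]
    exact Nat.cast_nonneg k
  · have hzi' := hI.1.mem_iff_blockIndex_eq.mp hzi
    have hsub : Z ∩ a i ⊆ {z} := fun n ⟨hnZ, hni⟩ =>
      hinj hnZ hzZ ((hI.1.mem_iff_blockIndex_eq.mp hni).trans hzi'.symm)
    calc φ i (Z ∩ a i) ≤ φ i {z} := (hI.2.1 i).2.2.1 _ _ hsub (singleton_subset_iff.mpr hzi)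
      _ ≤ k := by simpa only [pointWeight, Nat.ceil_le, hzi'] using hZ z hzZ

theorem isTallOn_pointWeight_le (hI : IsFragmentation I a φ) (k : ℕ) :
    IsTallOn I {n | pointWeight a φ n ≤ k} := by
  intro Y hYk hY
  obtain ⟨Z, hZY, hbij⟩ := exists_subset_bijOn Y (blockIndex a)
  have hfib : ∀ i, (blockIndex a ⁻¹' {i}).Finite := fun i =>
    (hI.1.2.1 i).subset fun n hn => hI.1.mem_iff_blockIndex_eq.mpr hn
  have himg : (blockIndex a '' Y).Infinite := fun hfin =>
    hY ((hfin.preimage' fun i _ => hfib i).subset (subset_preimage_image _ _))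
  refine ⟨Z, hZY, fun hZ => himg (hbij.image_eq ▸ hZ.image _), ?_⟩
  exact hI.mem_of_injOn_blockIndex (fun n hn => hYk (hZY hn)) hbij.injOn

theorem eq_boundedIdeal (hI : IsFragmentation I a φ) (hnt : NowhereTall I) :
    I = boundedIdeal (pointWeight a φ) := by
  ext x
  refine ⟨hI.bddAbove_pointWeight, fun ⟨k, hk⟩ => ?_⟩
  have hSk : {n | pointWeight a φ n ≤ k} ∈ I := by
    by_contra hS
    exact hnt ⟨_, hS, hI.isTallOn_pointWeight_le k⟩
  exact hI.mem_of_subset (fun n hn => hk (mem_image_of_mem _ hn)) hSk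

end IsFragmentation

end Fragmentation

/-- If `I` is a non-trivial nowhere tall fragmented ideal on `ω`, then the Rothberger
number `𝔟(I)` equals the unbounding number `𝔟`: there is an `I`-(ω,𝔟)-gap and `𝔟` is
least among cardinals `λ` admitting an `I`-(ω,λ)-gap. -/
theorem rothberger_nowhere_tall_eq_b
    (a : ℕ → Set ℕ) (φ : ℕ → Set ℕ → ℝ) (I : Set (Set ℕ))
    (hfrag : IsFragmentation I a φ)
    (hnontriv : Set.univ ∉ I)
    (hnt : NowhereTall I) :
    HasOmegaGap I unboundingNumber ∧
    ∀ lam : Cardinal, HasOmegaGap I lam → unboundingNumber ≤ lam := by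
  rw [hfrag.eq_boundedIdeal hnt] at hnontriv ⊢
  have hunb : ¬ BddAbove (range (pointWeight a φ)) := by rwa [← image_univ]
  exact ⟨hasOmegaGap_boundedIdeal hunb, fun _ => unboundingNumber_le_of_hasOmegaGap⟩
end

section
/- Let φ be a lower semicontinuous submeasure on P(ω) such that the exhaustive ideal I = Exh(φ) is a non-trivial ideal on ω. Then every I-orthogonal pair ⟨𝒜,ℬ⟩ in which 𝒜 is a countable partition of ω and |ℬ| < 𝔟 is separated by some C ⊆ ω; consequently there is no I-(ω,λ)-gap with λ < 𝔟, i.e., 𝔟(I) ≥ 𝔟. -/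
open Set Filter Cardinal

open ENNReal

/-- The exhaustive ideal `Exh(φ) = {x ⊆ ω : lim_n φ(x ∖ n) = 0}`. -/
def ExhIdeal (φ : Set ℕ → ℝ≥0∞) : Set (Set ℕ) :=
  {x | Tendsto (fun n : ℕ => φ (x \ Set.Iio n)) atTop (nhds 0)}


/-! For `b ∈ B` let `f_b i` be a point beyond which the tail of `A i ∩ b` has submeasure at most
`2⁻ⁱ`. As `|B| < 𝔟`, a single `g` eventually dominates every `f_b`. The set
`C = ⋃ i, A i ∩ [0, g i)` meets each `A i` in a finite set, and `b \ C` is covered by the sets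
`(A i ∩ b) \ [0, g i)`: each lies in `Exh(φ)` and eventually has submeasure at most `2⁻ⁱ`, so
countable subadditivity (which is where lower semicontinuity enters) puts their union in `Exh(φ)`.
An arbitrary countable `𝒜` is reduced to a partition by disjointifying it after adding the
complement of `⋃ 𝒜` to every member; that complement is then added to the separator. -/

open Topology

structure IsSubmeasure (φ : Set ℕ → ℝ≥0∞) : Prop where
  empty : φ ∅ = 0
  mono : Monotone φ
  union_le : ∀ x y, φ (x ∪ y) ≤ φ x + φ y

theorem IsIdealOn.biUnion_mem {I : Set (Set ℕ)} (hI : IsIdealOn I) {x : ℕ → Set ℕ}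
    (s : Finset ℕ) (hx : ∀ i ∈ s, x i ∈ I) : (⋃ i ∈ s, x i) ∈ I := by
  classical
  induction s using Finset.induction with
  | empty => simpa using hI.1 ∅ finite_empty
  | insert i s hi ih =>
    rw [Finset.set_biUnion_insert]
    exact hI.2.2 _ _ (hx i (Finset.mem_insert_self i s))
      (ih fun j hj => hx j (Finset.mem_insert_of_mem hj))

namespace IsSubmeasure

variable {φ : Set ℕ → ℝ≥0∞}

theorem iUnion_le_tsum (hφ : IsSubmeasure φ)
    (hlsc : ∀ x, Tendsto (fun n : ℕ => φ (x ∩ Iio n)) atTop (𝓝 (φ x))) (x : ℕ → Set ℕ) :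
    φ (⋃ i, x i) ≤ ∑' i, φ (x i) := by
  refine le_of_tendsto' (hlsc _) fun n => ?_
  obtain ⟨s, hs, hcover⟩ :=
    finite_subset_iUnion (finite_Iio n |>.subset inter_subset_right) inter_subset_left
  calc φ ((⋃ i, x i) ∩ Iio n) ≤ φ (⋃ i ∈ hs.toFinset, x i) := hφ.mono (by simpa using hcover)
    _ ≤ ∑ i ∈ hs.toFinset, φ (x i) :=
      Finset.apply_union_le_sum hφ.empty (fun {s t} => hφ.union_le s t) _
    _ ≤ ∑' i, φ (x i) := ENNReal.sum_le_tsum _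

theorem finite_mem_exhIdeal (hφ : IsSubmeasure φ) {x : Set ℕ} (hx : x.Finite) :
    x ∈ ExhIdeal φ := by
  obtain ⟨N, hN⟩ := hx.bddAbove
  refine tendsto_const_nhds.congr' (eventually_atTop.2 ⟨N + 1, fun n hn => (?_ : φ _ = 0).symm⟩)
  rw [sdiff_eq_empty.2 fun k hk => mem_Iio.2 ((hN hk).trans_lt (by omega)), hφ.empty]

theorem exhIdeal_of_subset (hφ : IsSubmeasure φ) {x y : Set ℕ} (hxy : x ⊆ y)
    (hy : y ∈ ExhIdeal φ) : x ∈ ExhIdeal φ :=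
  tendsto_of_tendsto_of_tendsto_of_le_of_le tendsto_const_nhds hy (fun _ => zero_le)
    fun _ => hφ.mono (sdiff_subset_sdiff_left hxy)

theorem union_mem_exhIdeal (hφ : IsSubmeasure φ) {x y : Set ℕ} (hx : x ∈ ExhIdeal φ)
    (hy : y ∈ ExhIdeal φ) : x ∪ y ∈ ExhIdeal φ :=
  tendsto_of_tendsto_of_tendsto_of_le_of_le tendsto_const_nhds (by simpa using hx.add hy)
    (fun _ => zero_le) fun n => by
      simpa only [union_sdiff_distrib] using hφ.union_le (x \ Iio n) (y \ Iio n)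

theorem isIdealOn_exhIdeal (hφ : IsSubmeasure φ) : IsIdealOn (ExhIdeal φ) :=
  ⟨fun _ => hφ.finite_mem_exhIdeal, fun _ _ => hφ.exhIdeal_of_subset,
    fun _ _ => hφ.union_mem_exhIdeal⟩

theorem iUnion_mem_exhIdeal (hφ : IsSubmeasure φ)
    (hlsc : ∀ x, Tendsto (fun n : ℕ => φ (x ∩ Iio n)) atTop (𝓝 (φ x)))
    {x : ℕ → Set ℕ} (hx : ∀ i, x i ∈ ExhIdeal φ) {c : ℕ → ℝ≥0∞} (hc : ∑' i, c i ≠ ∞)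
    (hxc : ∀ᶠ i in atTop, φ (x i) ≤ c i) : ⋃ i, x i ∈ ExhIdeal φ := by
  refine ENNReal.tendsto_atTop_zero.2 fun ε hε => ?_
  have hε2 : 0 < ε / 2 := ENNReal.half_pos hε.ne'
  obtain ⟨m, hm, hxcm⟩ : ∃ m, ∑' k, c (k + m) ≤ ε / 2 ∧ ∀ k, φ (x (k + m)) ≤ c (k + m) := by
    obtain ⟨i₀, hi₀⟩ := eventually_atTop.1 hxc
    obtain ⟨M, hM⟩ := ENNReal.tendsto_atTop_zero.1 (ENNReal.tendsto_sum_nat_add c hc) _ hε2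
    exact ⟨max M i₀, hM _ (le_max_left _ _), fun k => hi₀ _ (by omega)⟩
  set head := ⋃ i ∈ Finset.range m, x i
  obtain ⟨N, hN⟩ := ENNReal.tendsto_atTop_zero.1
    (hφ.isIdealOn_exhIdeal.biUnion_mem (Finset.range m) fun i _ => hx i) _ hε2
  refine ⟨N, fun n hn => ?_⟩
  have hsplit : (⋃ i, x i) \ Iio n ⊆ (head \ Iio n) ∪ ⋃ k, x (k + m) := by
    rintro y ⟨hy, hyn⟩
    obtain ⟨i, hyi⟩ := mem_iUnion.1 hy
    rcases lt_or_ge i m with him | him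
    · exact Or.inl ⟨mem_biUnion (Finset.mem_range.2 him) hyi, hyn⟩
    · exact Or.inr (mem_iUnion.2 ⟨i - m, by rwa [Nat.sub_add_cancel him]⟩)
  calc φ ((⋃ i, x i) \ Iio n) ≤ φ (head \ Iio n) + φ (⋃ k, x (k + m)) :=
        (hφ.mono hsplit).trans (hφ.union_le _ _)
    _ ≤ ε / 2 + ∑' k, c (k + m) :=
        add_le_add (hN n hn) ((hφ.iUnion_le_tsum hlsc _).trans (ENNReal.tsum_le_tsum hxcm))
    _ ≤ ε / 2 + ε / 2 := by gcongr
    _ = ε := ENNReal.add_halves ε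

end IsSubmeasure

theorem exists_eventually_le_of_mk_lt_unboundingNumber {F : Set (ℕ → ℕ)}
    (hF : #F < unboundingNumber) : ∃ g : ℕ → ℕ, ∀ f ∈ F, ∀ᶠ i in atTop, f i ≤ g i := by
  by_contra h
  refine hF.not_ge (csInf_le' ⟨F, rfl, fun g => ?_⟩)
  by_contra hg
  exact h ⟨g, fun f hf => not_not.1 fun hfg => hg ⟨f, hf, hfg⟩⟩

def SeparatesPartitionPairs (I : Set (Set ℕ)) (κ : Cardinal) : Prop :=
  ∀ A : ℕ → Set ℕ, (∀ i j, i ≠ j → Disjoint (A i) (A j)) → (⋃ i, A i) = Set.univ →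
    ∀ B : Set (Set ℕ), #B < κ → (∀ i : ℕ, ∀ b ∈ B, A i ∩ b ∈ I) →
      ∃ C : Set ℕ, (∀ i : ℕ, A i ∩ C ∈ I) ∧ ∀ b ∈ B, b \ C ∈ I

theorem IsSubmeasure.separatesPartitionPairs_exhIdeal {φ : Set ℕ → ℝ≥0∞}
    (hφ : IsSubmeasure φ) (hlsc : ∀ x, Tendsto (fun n : ℕ => φ (x ∩ Iio n)) atTop (𝓝 (φ x))) :
    SeparatesPartitionPairs (ExhIdeal φ) unboundingNumber := by
  intro A hdisj hcover B hB horth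
  have hmodulus : ∀ b, ∃ f : ℕ → ℕ, b ∈ B → ∀ i, φ ((A i ∩ b) \ Iio (f i)) ≤ 2⁻¹ ^ i := by
    intro b
    by_cases hb : b ∈ B
    · choose f hf using fun i =>
        ENNReal.tendsto_atTop_zero.1 (horth i b hb) (2⁻¹ ^ i) (ENNReal.pow_pos (by norm_num) i)
      exact ⟨f, fun _ i => hf i _ le_rfl⟩
    · exact ⟨0, fun h => absurd h hb⟩
  choose f hf using hmodulus
  obtain ⟨g, hg⟩ := exists_eventually_le_of_mk_lt_unboundingNumber (F := f '' B)
    (mk_image_le.trans_lt hB)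
  refine ⟨⋃ i, A i ∩ Iio (g i), fun i => hφ.finite_mem_exhIdeal ((finite_Iio (g i)).subset ?_),
    fun b hb => hφ.exhIdeal_of_subset (y := ⋃ i, (A i ∩ b) \ Iio (g i)) ?_ ?_⟩
  · rintro y ⟨hyA, hyC⟩
    obtain ⟨j, hyj, hyg⟩ := mem_iUnion.1 hyC
    obtain rfl : j = i := by_contra fun hji => disjoint_left.1 (hdisj j i hji) hyj hyA
    exact hyg
  · rintro y ⟨hyb, hyC⟩
    obtain ⟨i, hyi⟩ := mem_iUnion.1 (hcover.symm ▸ mem_univ y)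
    exact mem_iUnion.2 ⟨i, ⟨hyi, hyb⟩, fun hyg => hyC (mem_iUnion.2 ⟨i, hyi, hyg⟩)⟩
  · refine hφ.iUnion_mem_exhIdeal hlsc (fun i => hφ.exhIdeal_of_subset sdiff_subset (horth i b hb))
      (c := fun i => 2⁻¹ ^ i) (by simp) ?_
    filter_upwards [hg (f b) (mem_image_of_mem f hb)] with i hi
    exact (hφ.mono (sdiff_subset_sdiff_right (Iio_subset_Iio hi))).trans (hf b hb i)

theorem SeparatesPartitionPairs.exists_separator_of_seq {I : Set (Set ℕ)} {κ : Cardinal}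
    (hsep : SeparatesPartitionPairs I κ) (hI : IsIdealOn I) (e : ℕ → Set ℕ)
    {B : Set (Set ℕ)} (hB : #B < κ) (horth : ∀ n, ∀ b ∈ B, e n ∩ b ∈ I) :
    ∃ C : Set ℕ, (∀ n, e n ∩ C ∈ I) ∧ ∀ b ∈ B, b \ C ∈ I := by
  set R := (⋃ n, e n)ᶜ
  set Q := disjointed fun n => e n ∪ R
  obtain ⟨C, hQC, hBC⟩ := hsep Q (fun _ _ hij => disjoint_disjointed _ hij)
    (by rw [iUnion_disjointed, ← iUnion_union, union_compl_self]) ((· \ R) '' B)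
    (mk_image_le.trans_lt hB) (by
      rintro i - ⟨b, hb, rfl⟩
      refine hI.2.1 _ _ ?_ (horth i b hb)
      rintro y ⟨hyQ, hyb, hyR⟩
      exact ⟨(disjointed_subset _ i hyQ).resolve_right hyR, hyb⟩)
  refine ⟨C ∪ R, fun n => hI.2.1 _ _ ?_ (hI.biUnion_mem (Finset.range (n + 1)) fun k _ => hQC k),
    fun b hb => ?_⟩
  · rintro y ⟨hye, hyC | hyR⟩
    · have hy : y ∈ partialSups (fun n => e n ∪ R) n :=
        mem_of_subset_of_mem (le_partialSups (fun n => e n ∪ R) n) (Or.inl hye)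
      rw [← biUnion_range_succ_disjointed] at hy
      obtain ⟨k, hk, hyk⟩ := mem_iUnion₂.1 hy
      exact mem_iUnion₂.2 ⟨k, hk, hyk, hyC⟩
    · exact absurd (mem_iUnion.2 ⟨n, hye⟩) hyR
  · rw [union_comm, ← Set.sdiff_sdiff]
    exact hBC _ (mem_image_of_mem _ hb)

theorem SeparatesPartitionPairs.le_of_hasOmegaGap {I : Set (Set ℕ)} {κ lam : Cardinal}
    (hsep : SeparatesPartitionPairs I κ) (hI : IsIdealOn I) (hgap : HasOmegaGap I lam) :
    κ ≤ lam := by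
  obtain ⟨A, B, ⟨horth, hnosep⟩, hA, rfl⟩ := hgap
  by_contra! hB
  have hAne : A.Nonempty := nonempty_coe_sort.1 (mk_ne_zero_iff.1 (hA ▸ aleph0_ne_zero))
  obtain ⟨e, rfl⟩ := (le_aleph0_iff_set_countable.1 hA.le).exists_eq_range hAne
  obtain ⟨C, heC, hBC⟩ := hsep.exists_separator_of_seq hI e hB fun n => horth _ (mem_range_self n)
  exact hnosep C ⟨forall_mem_range.2 heC, hBC⟩

theorem b_le_rothberger_of_exhaustive_general
    (φ : Set ℕ → ℝ≥0∞)
    (hempty : φ ∅ = 0)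
    (hmono : ∀ x y : Set ℕ, x ⊆ y → φ x ≤ φ y)
    (hsubadd : ∀ x y : Set ℕ, φ (x ∪ y) ≤ φ x + φ y)
    (hlsc : ∀ x : Set ℕ, Tendsto (fun n : ℕ => φ (x ∩ Set.Iio n)) atTop (nhds (φ x))) :
    (∀ A : ℕ → Set ℕ, (∀ i j, i ≠ j → Disjoint (A i) (A j)) → (⋃ i, A i) = Set.univ →
      ∀ B : Set (Set ℕ), #B < unboundingNumber →
        (∀ i : ℕ, ∀ b ∈ B, A i ∩ b ∈ ExhIdeal φ) →
        ∃ C : Set ℕ, (∀ i : ℕ, A i ∩ C ∈ ExhIdeal φ) ∧ ∀ b ∈ B, b \ C ∈ ExhIdeal φ) ∧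
    (∀ lam : Cardinal, HasOmegaGap (ExhIdeal φ) lam → unboundingNumber ≤ lam) := by
  have hφ : IsSubmeasure φ := ⟨hempty, fun x y => hmono x y, hsubadd⟩
  have hsep := hφ.separatesPartitionPairs_exhIdeal hlsc
  exact ⟨hsep, fun _ => hsep.le_of_hasOmegaGap hφ.isIdealOn_exhIdeal⟩

/-- Let `φ` be a lower semicontinuous submeasure on `P(ω)` such that `I = Exh(φ)` is a
non-trivial ideal on `ω`. Then every `I`-orthogonal pair `⟨A, B⟩` in which `A` is a
countable partition of `ω` and `|B| < 𝔟` is separated by some `C ⊆ ω`; consequently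
there is no `I`-(ω,λ)-gap with `λ < 𝔟`, i.e. `𝔟(I) ≥ 𝔟`. -/
theorem b_le_rothberger_of_exhaustive
    (φ : Set ℕ → ℝ≥0∞)
    (hempty : φ ∅ = 0)
    (hfin : ∀ x : Set ℕ, x.Finite → φ x ≠ ⊤)
    (hmono : ∀ x y : Set ℕ, x ⊆ y → φ x ≤ φ y)
    (hsubadd : ∀ x y : Set ℕ, φ (x ∪ y) ≤ φ x + φ y)
    (hlsc : ∀ x : Set ℕ, Tendsto (fun n : ℕ => φ (x ∩ Set.Iio n)) atTop (nhds (φ x)))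
    (hideal : IsIdealOn (ExhIdeal φ))
    (hnontriv : Set.univ ∉ ExhIdeal φ) :
    (∀ A : ℕ → Set ℕ, (∀ i j, i ≠ j → Disjoint (A i) (A j)) → (⋃ i, A i) = Set.univ →
      ∀ B : Set (Set ℕ), #B < unboundingNumber →
        (∀ i : ℕ, ∀ b ∈ B, A i ∩ b ∈ ExhIdeal φ) →
        ∃ C : Set ℕ, (∀ i : ℕ, A i ∩ C ∈ ExhIdeal φ) ∧ ∀ b ∈ B, b \ C ∈ ExhIdeal φ) ∧
    (∀ lam : Cardinal, HasOmegaGap (ExhIdeal φ) lam → unboundingNumber ≤ lam) :=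
  b_le_rothberger_of_exhaustive_general φ hempty hmono hsubadd hlsc
end
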